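/- Envelope bound: the SURE integrand f(x1, x2, μ; t) satisfies |f(x1, x2, μ; t)| ≤ F_n(x1, μ) := σ1² + (4σ1²/ρ) log(n/(2πσ1σ2)) + (2^{1/2}σ1/ρ^{1/2}) |x1 − μ| log^{1/2}(n/(2πσ1σ2)), uniformly over all parameter vectors t with n components per coordinate, for all sufficiently large n and ρ ∈ (0,1]. -/

import Mathlib

open Real

/-- Standard normal density. -/
noncomputable def gphi (x : ℝ) : ℝ := (Real.sqrt (2 * Real.pi))⁻¹ * Real.exp (-x ^ 2 / 2)

/-- Joint density of two independent normals with means `(t1, t2)` and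
standard deviations `(σ1, σ2)`. -/
noncomputable def pdens (σ1 σ2 t1 t2 x1 x2 : ℝ) : ℝ :=
  gphi ((x1 - t1) / σ1) * gphi ((x2 - t2) / σ2) / (σ1 * σ2)

/-- `A(x1,x2)`. -/
noncomputable def termA (n : ℕ) (σ1 σ2 ρ : ℝ) (t : Fin n → Fin 2 → ℝ) (x1 x2 : ℝ) : ℝ :=
  (∑ j : Fin n, (t j 0 - x1) ^ 2 * pdens σ1 σ2 (t j 0) (t j 1) x1 x2) /
  (ρ + ∑ j : Fin n, pdens σ1 σ2 (t j 0) (t j 1) x1 x2)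

/-- `B(x1,x2)`. -/
noncomputable def termB (n : ℕ) (σ1 σ2 ρ : ℝ) (t : Fin n → Fin 2 → ℝ) (x1 x2 : ℝ) : ℝ :=
  (∑ j : Fin n, pdens σ1 σ2 (t j 0) (t j 1) x1 x2) /
  (ρ + ∑ j : Fin n, pdens σ1 σ2 (t j 0) (t j 1) x1 x2)

/-- `C(x1,x2)`. -/
noncomputable def termC (n : ℕ) (σ1 σ2 ρ : ℝ) (t : Fin n → Fin 2 → ℝ) (x1 x2 : ℝ) : ℝ :=
  (∑ j : Fin n, (t j 0 - x1) * pdens σ1 σ2 (t j 0) (t j 1) x1 x2) /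
  (ρ + ∑ j : Fin n, pdens σ1 σ2 (t j 0) (t j 1) x1 x2)


/-!
The weights `p_j = pdens … x1 x2` are bounded by `exp (-u_j² / (2σ1²)) / M` with
`u_j = t_{j1} - x1` and `M = 2π σ1 σ2`. Put `L = log (n / M)`, which is at least `1` once
`n ≥ e M`. If `u_j² ≤ 2σ1² L` then `u_j² p_j ≤ 2σ1² L p_j`; otherwise, since `s e^{-s}` decreases on `[1, ∞)`,
`u_j² p_j ≤ 2σ1² L e^{-L} / M = 2σ1² L / n`. Summing over the `n` indices,
`∑ u_j² p_j ≤ 2σ1² L (∑ p_j + 1)`, and as `ρ ≤ 1` this gives `A ≤ 2σ1² L / ρ`.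
Cauchy–Schwarz gives `C² ≤ A B ≤ A`, and `0 ≤ B ≤ 1`, from which the envelope follows.
-/

open Finset

lemma gphi_nonneg (x : ℝ) : 0 ≤ gphi x := by
  unfold gphi; positivity

lemma gphi_le (x : ℝ) : gphi x ≤ (√(2 * π))⁻¹ := by
  unfold gphi
  have : exp (-x ^ 2 / 2) ≤ 1 := exp_le_one_iff.mpr (by nlinarith [sq_nonneg x])
  exact mul_le_of_le_one_right (by positivity) this

lemma pdens_nonneg {σ1 σ2 : ℝ} (hσ1 : 0 < σ1) (hσ2 : 0 < σ2) (t1 t2 x1 x2 : ℝ) :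
    0 ≤ pdens σ1 σ2 t1 t2 x1 x2 := by
  unfold pdens
  have := gphi_nonneg ((x1 - t1) / σ1)
  have := gphi_nonneg ((x2 - t2) / σ2)
  positivity

lemma pdens_le {σ1 σ2 : ℝ} (hσ1 : 0 < σ1) (hσ2 : 0 < σ2) (t1 t2 x1 x2 : ℝ) :
    pdens σ1 σ2 t1 t2 x1 x2 ≤
      (2 * π * σ1 * σ2)⁻¹ * exp (-(t1 - x1) ^ 2 / (2 * σ1 ^ 2)) := by
  have h2π : 2 * π * σ1 * σ2 = √(2 * π) * √(2 * π) * (σ1 * σ2) := by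
    rw [mul_self_sqrt (by positivity)]; ring
  have hfirst : gphi ((x1 - t1) / σ1) = (√(2 * π))⁻¹ * exp (-(t1 - x1) ^ 2 / (2 * σ1 ^ 2)) := by
    unfold gphi
    congr 2
    field_simp
    ring
  calc pdens σ1 σ2 t1 t2 x1 x2
      ≤ gphi ((x1 - t1) / σ1) * (√(2 * π))⁻¹ / (σ1 * σ2) := by
        unfold pdens
        gcongr
        exacts [gphi_nonneg _, gphi_le _]
    _ = (2 * π * σ1 * σ2)⁻¹ * exp (-(t1 - x1) ^ 2 / (2 * σ1 ^ 2)) := by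
        rw [hfirst, h2π]
        field_simp

lemma mul_exp_neg_le_of_one_le {L s : ℝ} (hL : 1 ≤ L) (hLs : L ≤ s) :
    s * exp (-s) ≤ L * exp (-L) := by
  have hs : s ≤ L * exp (s - L) := by
    nlinarith [add_one_le_exp (s - L)]
  calc s * exp (-s) ≤ L * exp (s - L) * exp (-s) := by gcongr
    _ = L * exp (-L) := by rw [mul_assoc, ← exp_add]; ring_nf

lemma sq_mul_le_of_le_mul_exp {c K L u p : ℝ} (hc : 0 < c) (hL : 1 ≤ L) (hp0 : 0 ≤ p)
    (hp : p ≤ K * exp (-u ^ 2 / c)) :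
    u ^ 2 * p ≤ c * L * p + c * L * (K * exp (-L)) := by
  have hK : 0 ≤ K := (mul_nonneg_iff_of_pos_right (exp_pos _)).mp (hp0.trans hp)
  have hbulk : 0 ≤ c * L * p := mul_nonneg (by positivity) hp0
  have htail : 0 ≤ c * L * (K * exp (-L)) := by positivity
  rcases le_or_gt (u ^ 2) (c * L) with hsmall | hlarge
  · nlinarith
  · have hs : L ≤ u ^ 2 / c := by rw [le_div_iff₀ hc]; linarith
    calc u ^ 2 * p ≤ u ^ 2 * (K * exp (-u ^ 2 / c)) := by gcongr
      _ = c * K * (u ^ 2 / c * exp (-(u ^ 2 / c))) := by field_simp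
      _ ≤ c * K * (L * exp (-L)) :=
          mul_le_mul_of_nonneg_left (mul_exp_neg_le_of_one_le hL hs) (by positivity)
      _ ≤ c * L * p + c * L * (K * exp (-L)) := by linarith

lemma sum_sq_mul_le_of_le_mul_exp {ι : Type*} (s : Finset ι) {u p : ι → ℝ} {c K L : ℝ}
    (hc : 0 < c) (hL : 1 ≤ L) (hp0 : ∀ i ∈ s, 0 ≤ p i)
    (hp : ∀ i ∈ s, p i ≤ K * exp (-u i ^ 2 / c)) :
    ∑ i ∈ s, u i ^ 2 * p i ≤ c * L * (∑ i ∈ s, p i + #s * K * exp (-L)) := by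
  calc ∑ i ∈ s, u i ^ 2 * p i ≤ ∑ i ∈ s, (c * L * p i + c * L * (K * exp (-L))) :=
        sum_le_sum fun i hi => sq_mul_le_of_le_mul_exp hc hL (hp0 i hi) (hp i hi)
    _ = c * L * (∑ i ∈ s, p i + #s * K * exp (-L)) := by
        rw [sum_add_distrib, ← mul_sum, sum_const, nsmul_eq_mul]; ring

section Terms

variable {n : ℕ} {σ1 σ2 ρ : ℝ} (t : Fin n → Fin 2 → ℝ) (x1 x2 : ℝ)

lemma sum_pdens_nonneg (hσ1 : 0 < σ1) (hσ2 : 0 < σ2) :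
    0 ≤ ∑ j : Fin n, pdens σ1 σ2 (t j 0) (t j 1) x1 x2 :=
  sum_nonneg fun _ _ => pdens_nonneg hσ1 hσ2 _ _ _ _

lemma termA_nonneg (hσ1 : 0 < σ1) (hσ2 : 0 < σ2) (hρ0 : 0 < ρ) :
    0 ≤ termA n σ1 σ2 ρ t x1 x2 :=
  div_nonneg (sum_nonneg fun _ _ => mul_nonneg (sq_nonneg _) (pdens_nonneg hσ1 hσ2 _ _ _ _))
    (by linarith [sum_pdens_nonneg t x1 x2 hσ1 hσ2])

lemma termB_nonneg (hσ1 : 0 < σ1) (hσ2 : 0 < σ2) (hρ0 : 0 < ρ) :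
    0 ≤ termB n σ1 σ2 ρ t x1 x2 :=
  div_nonneg (sum_pdens_nonneg t x1 x2 hσ1 hσ2) (by linarith [sum_pdens_nonneg t x1 x2 hσ1 hσ2])

lemma termB_le_one (hσ1 : 0 < σ1) (hσ2 : 0 < σ2) (hρ0 : 0 < ρ) :
    termB n σ1 σ2 ρ t x1 x2 ≤ 1 := by
  have := sum_pdens_nonneg t x1 x2 hσ1 hσ2
  unfold termB
  rw [div_le_one (by linarith)]
  linarith

lemma termC_sq_le_termA_mul_termB (hσ1 : 0 < σ1) (hσ2 : 0 < σ2) :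
    termC n σ1 σ2 ρ t x1 x2 ^ 2 ≤ termA n σ1 σ2 ρ t x1 x2 * termB n σ1 σ2 ρ t x1 x2 := by
  have hp := fun j : Fin n => pdens_nonneg hσ1 hσ2 (t j 0) (t j 1) x1 x2
  unfold termA termB termC
  rw [div_pow, div_mul_div_comm, ← sq]
  gcongr
  exact sum_sq_le_sum_mul_sum_of_sq_le_mul _ (fun j _ => mul_nonneg (sq_nonneg _) (hp j))
    (fun j _ => hp j) (fun j _ => le_of_eq (by ring))

lemma termA_le (hσ1 : 0 < σ1) (hσ2 : 0 < σ2) (hρ0 : 0 < ρ) (hρ1 : ρ ≤ 1)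
    (hL : 1 ≤ log (n / (2 * π * σ1 * σ2))) :
    termA n σ1 σ2 ρ t x1 x2 ≤ 2 * σ1 ^ 2 * log (n / (2 * π * σ1 * σ2)) / ρ := by
  have hn : (0 : ℝ) < n := by
    by_contra! h
    rw [le_antisymm h n.cast_nonneg, zero_div, log_zero] at hL
    linarith
  -- `e^{-L} = M / n`, so the tails of the `n` summands add up to exactly one
  have htail : (#(univ : Finset (Fin n)) : ℝ) * (2 * π * σ1 * σ2)⁻¹ *
      exp (-log (n / (2 * π * σ1 * σ2))) = 1 := by
    rw [card_univ, Fintype.card_fin, exp_neg, exp_log (by positivity)]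
    field_simp
  have hnum := sum_sq_mul_le_of_le_mul_exp univ (u := fun j => t j 0 - x1)
    (by positivity : 0 < 2 * σ1 ^ 2) hL
    (fun j _ => pdens_nonneg hσ1 hσ2 (t j 0) (t j 1) x1 x2)
    (fun j _ => pdens_le hσ1 hσ2 (t j 0) (t j 1) x1 x2)
  rw [htail] at hnum
  have hS := sum_pdens_nonneg t x1 x2 hσ1 hσ2
  have hcL : 0 ≤ 2 * σ1 ^ 2 * log (n / (2 * π * σ1 * σ2)) := by positivity
  unfold termA
  rw [div_le_div_iff₀ (by linarith) hρ0]
  nlinarith [mul_nonneg hcL hS]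

end Terms

lemma abs_sub_mul_sub_sq_sub_mul_le {A B C a s d : ℝ} (hA0 : 0 ≤ A) (hAa : A ≤ a)
    (hB0 : 0 ≤ B) (hB1 : B ≤ 1) (hC : C ^ 2 ≤ A) (hs : 0 ≤ s) :
    |A - s * B - C ^ 2 - d * C| ≤ s + a + |d| * √a := by
  have hdC : |d * C| ≤ |d| * √a := by
    rw [abs_mul, ← sqrt_sq_eq_abs C]
    gcongr
    exact hC.trans hAa
  have hsB : s * B ≤ s := mul_le_of_le_one_right hs hB1
  rw [abs_le] at hdC ⊢
  constructor <;> nlinarith [sq_nonneg C, mul_nonneg hs hB0]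

/-- Envelope bound: for all sufficiently large `n`, uniformly over all parameter
vectors `t`, the SURE integrand satisfies
`|f(x1,x2,μ;t)| ≤ F_n(x1,μ) = σ1² + (4σ1²/ρ) log(n/(2πσ1σ2)) +
(√2 σ1/√ρ) |x1 − μ| log^{1/2}(n/(2πσ1σ2))`. -/
theorem stmt13 (σ1 σ2 ρ : ℝ) (hσ1 : 0 < σ1) (hσ2 : 0 < σ2)
    (hρ0 : 0 < ρ) (hρ1 : ρ ≤ 1) :
    ∃ N : ℕ, ∀ n : ℕ, N ≤ n → ∀ (t : Fin n → Fin 2 → ℝ) (x1 x2 μ : ℝ),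
      |termA n σ1 σ2 ρ t x1 x2 - σ1 ^ 2 * termB n σ1 σ2 ρ t x1 x2 -
          (termC n σ1 σ2 ρ t x1 x2) ^ 2 - (x1 - μ) * termC n σ1 σ2 ρ t x1 x2| ≤
        σ1 ^ 2 + 4 * σ1 ^ 2 / ρ * Real.log ((n : ℝ) / (2 * Real.pi * σ1 * σ2)) +
          Real.sqrt 2 * σ1 / Real.sqrt ρ * |x1 - μ| *
            Real.sqrt (Real.log ((n : ℝ) / (2 * Real.pi * σ1 * σ2))) := by
  have hM : 0 < 2 * π * σ1 * σ2 := by positivity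
  refine ⟨⌈exp 1 * (2 * π * σ1 * σ2)⌉₊, fun n hn t x1 x2 μ => ?_⟩
  have hnM : exp 1 * (2 * π * σ1 * σ2) ≤ n := (Nat.le_ceil _).trans (by exact_mod_cast hn)
  have hL : 1 ≤ log (n / (2 * π * σ1 * σ2)) := by
    rw [le_log_iff_exp_le (div_pos ((by positivity : (0 : ℝ) < _).trans_le hnM) hM),
      le_div_iff₀ hM]
    exact hnM
  have hCA : termC n σ1 σ2 ρ t x1 x2 ^ 2 ≤ termA n σ1 σ2 ρ t x1 x2 :=
    (termC_sq_le_termA_mul_termB t x1 x2 hσ1 hσ2).trans (mul_le_of_le_one_right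
      (termA_nonneg t x1 x2 hσ1 hσ2 hρ0) (termB_le_one t x1 x2 hσ1 hσ2 hρ0))
  have key := abs_sub_mul_sub_sq_sub_mul_le (d := x1 - μ) (termA_nonneg t x1 x2 hσ1 hσ2 hρ0)
    (termA_le t x1 x2 hσ1 hσ2 hρ0 hρ1 hL) (termB_nonneg t x1 x2 hσ1 hσ2 hρ0)
    (termB_le_one t x1 x2 hσ1 hσ2 hρ0) hCA (sq_nonneg σ1)
  generalize log (n / (2 * π * σ1 * σ2)) = L at hL key ⊢
  have hsqrt : √(2 * σ1 ^ 2 * L / ρ) = √2 * σ1 / √ρ * √L := by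
    rw [sqrt_div' _ hρ0.le, sqrt_mul' _ (by positivity), sqrt_mul' _ (sq_nonneg σ1),
      sqrt_sq hσ1.le]
    ring
  have ha : 0 ≤ 2 * σ1 ^ 2 * L / ρ := by positivity
  rw [hsqrt] at key
  linarith [show 4 * σ1 ^ 2 / ρ * L = 2 * (2 * σ1 ^ 2 * L / ρ) by ring,
    show |x1 - μ| * (√2 * σ1 / √ρ * √L) = √2 * σ1 / √ρ * |x1 - μ| * √L by ring]
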